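/- Let 0 < l_z < 1. The volume of the set {(x,y,z) : 0 ≤ x,y ≤ 1, l_z ≤ z, z ≥ x+y−1, 2z ≤ x + y − √((x−y)² + 4·l_z·(1−x)·(1−y))} equals ((1 − l_z)/6)·(1 + 2·l_z·ln(l_z) − l_z²). -/

import Mathlib

/-!
Squaring, the SOC constraint becomes `2z ≤ x + y` together with
`l (1 - x)(1 - y) ≤ (x - z)(y - z)`, which is linear in `x` once `y, z` are fixed. Hence the
section of the set at `(y, z)` is nonempty only for `l ≤ z ≤ y ≤ 1`, and is then the interval
from `1 - (y - z)(1 - z) / (y - z + l (1 - y))` to `1 + z - y` (the RLT bound). Its length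
integrates over `y ∈ [z, 1]` to `c (1 - z)²` with `c = ((1 - l²)/2 + l ln l) / (1 - l)²`, and
`∫_l^1 c (1 - z)² dz = c (1 - l)³ / 3`.
-/

open Real Set MeasureTheory

theorem le_sub_sqrt_iff {a b D : ℝ} : a ≤ b - √D ↔ a ≤ b ∧ D ≤ (b - a) ^ 2 := by
  rw [le_sub_comm, Real.sqrt_le_iff, sub_nonneg]

theorem prod_prod_apply_eq_lintegral_lintegral {α β γ : Type*} [MeasurableSpace α]
    [MeasurableSpace β] [MeasurableSpace γ] {μ : Measure α} {ν : Measure β} {ρ : Measure γ}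
    [SFinite μ] [SFinite ν] [SFinite ρ] {s : Set (α × β × γ)} (hs : MeasurableSet s) :
    μ.prod (ν.prod ρ) s = ∫⁻ z, ∫⁻ y, μ {x | (x, y, z) ∈ s} ∂ν ∂ρ := by
  rw [Measure.prod_apply_symm hs,
    lintegral_prod_symm _ (measurable_measure_prodMk_right hs).aemeasurable]
  rfl

theorem setLIntegral_Icc_ofReal_eq_integral {f : ℝ → ℝ} {a b : ℝ} (hab : a ≤ b)
    (hf : ContinuousOn f (Icc a b)) (hnn : ∀ x ∈ Icc a b, 0 ≤ f x) :
    ∫⁻ x in Icc a b, ENNReal.ofReal (f x) = ENNReal.ofReal (∫ x in a..b, f x) := by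
  rw [intervalIntegral.integral_of_le hab, ← integral_Icc_eq_integral_Ioc,
    ofReal_integral_eq_lintegral_ofReal (hf.integrableOn_compact isCompact_Icc)
      (ae_restrict_of_forall_mem measurableSet_Icc hnn)]

def InBilinearHull (l x y z : ℝ) : Prop :=
  0 ≤ x ∧ x ≤ 1 ∧ 0 ≤ y ∧ y ≤ 1 ∧ l ≤ z ∧ x + y - 1 ≤ z ∧
    2 * z ≤ x + y - √((x - y) ^ 2 + 4 * l * (1 - x) * (1 - y))

theorem measurableSet_inBilinearHull (l : ℝ) :
    MeasurableSet {p : ℝ × ℝ × ℝ | InBilinearHull l p.1 p.2.1 p.2.2} := by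
  refine IsClosed.measurableSet ?_
  simp only [InBilinearHull, ofPred_and]
  repeat' apply IsClosed.inter
  all_goals exact isClosed_le (by fun_prop) (by fun_prop)

/-- The denominator vanishes only at `y = z = 1`, where `x / 0 = 0` makes this `1`: the section
there is indeed `{1}`. -/
noncomputable def sliceLower (l y z : ℝ) : ℝ := 1 - (y - z) * (1 - z) / (y - z + l * (1 - y))

noncomputable def sliceWidth (l y z : ℝ) : ℝ := 1 + z - y - sliceLower l y z

section
variable {l x y z : ℝ}

theorem two_mul_le_sub_sqrt_iff :
    2 * z ≤ x + y - √((x - y) ^ 2 + 4 * l * (1 - x) * (1 - y)) ↔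
      2 * z ≤ x + y ∧ l * (1 - x) * (1 - y) ≤ (x - z) * (y - z) := by
  rw [le_sub_sqrt_iff, show (x + y - 2 * z) ^ 2 = (x - y) ^ 2 + 4 * ((x - z) * (y - z)) by ring]
  exact and_congr_right fun _ => by constructor <;> intro h <;> linarith

theorem sliceLower_denom_pos (hl0 : 0 < l) (hl1 : l ≤ 1) (hzy : z ≤ y) (hz : z < 1) :
    0 < y - z + l * (1 - y) := by
  nlinarith

theorem sliceLower_le_iff (hd : 0 < y - z + l * (1 - y)) :
    sliceLower l y z ≤ x ↔ l * (1 - x) * (1 - y) ≤ (x - z) * (y - z) := by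
  rw [sliceLower, sub_le_comm, le_div_iff₀ hd]
  constructor <;> intro h <;> linarith

theorem le_sliceLower (hl : 0 ≤ l) (hzy : z ≤ y) (hy : y ≤ 1) : z ≤ sliceLower l y z := by
  rw [sliceLower, le_sub_comm]
  have h1y : 0 ≤ 1 - y := by linarith
  exact div_le_of_le_mul₀ (by positivity) (by linarith)
    (by nlinarith [mul_nonneg (mul_nonneg (sub_nonneg.2 (hzy.trans hy)) hl) h1y])

theorem sliceLower_one_one : sliceLower l 1 1 = 1 := by
  simp [sliceLower]

theorem inBilinearHull_iff (hl0 : 0 < l) (hl1 : l < 1) :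
    InBilinearHull l x y z ↔
      (l ≤ z ∧ z ≤ y ∧ y ≤ 1) ∧ x ∈ Icc (sliceLower l y z) (1 + z - y) := by
  constructor
  · rintro ⟨hx0, hx1, hy0, hy1, hlz, hxy, hsoc⟩
    obtain ⟨h2z, hq⟩ := two_mul_le_sub_sqrt_iff.1 hsoc
    have hzy : z ≤ y := by
      by_contra! h
      nlinarith [mul_pos (by linarith : 0 < x - z) (by linarith : 0 < z - y),
        mul_nonneg (mul_nonneg hl0.le (sub_nonneg.2 hx1)) (sub_nonneg.2 hy1)]
    refine ⟨⟨hlz, hzy, hy1⟩, ?_, by linarith⟩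
    rcases (hzy.trans hy1).lt_or_eq with hz | rfl
    · exact (sliceLower_le_iff (sliceLower_denom_pos hl0 hl1.le hzy hz)).2 hq
    · obtain rfl : y = 1 := le_antisymm hy1 hzy
      rw [sliceLower_one_one]
      linarith
  · rintro ⟨⟨hlz, hzy, hy1⟩, hlow, hup⟩
    have hzx : z ≤ x := (le_sliceLower hl0.le hzy hy1).trans hlow
    have hq : l * (1 - x) * (1 - y) ≤ (x - z) * (y - z) := by
      rcases (hzy.trans hy1).lt_or_eq with hz | rfl
      · exact (sliceLower_le_iff (sliceLower_denom_pos hl0 hl1.le hzy hz)).1 hlow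
      · obtain rfl : y = 1 := le_antisymm hy1 hzy
        simp
    exact ⟨by linarith, by linarith, by linarith, hy1, hlz, by linarith,
      two_mul_le_sub_sqrt_iff.2 ⟨by linarith, hq⟩⟩

theorem volume_inBilinearHull_section (hl0 : 0 < l) (hl1 : l < 1) :
    volume {x | InBilinearHull l x y z} =
      if l ≤ z ∧ z ≤ y ∧ y ≤ 1 then ENNReal.ofReal (sliceWidth l y z) else 0 := by
  simp_rw [inBilinearHull_iff hl0 hl1]
  split_ifs with h
  · simp only [h, true_and, ofPred_mem_eq, Real.volume_Icc]
    rfl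
  · simp only [h, false_and, ofPred_false, measure_empty]

theorem lintegral_volume_inBilinearHull_section (hl0 : 0 < l) (hl1 : l < 1) :
    ∫⁻ y, volume {x | InBilinearHull l x y z} =
      (Icc l 1).indicator (fun z => ∫⁻ y in Icc z 1, ENNReal.ofReal (sliceWidth l y z)) z := by
  simp_rw [volume_inBilinearHull_section hl0 hl1]
  by_cases hz : z ∈ Icc l 1
  · rw [indicator_of_mem hz, ← lintegral_indicator measurableSet_Icc]
    simp only [hz.1, true_and, indicator_apply, mem_Icc]
  · rw [indicator_of_notMem hz]
    have hP : ∀ y, ¬(l ≤ z ∧ z ≤ y ∧ y ≤ 1) := fun y h => hz ⟨h.1, h.2.1.trans h.2.2⟩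
    simp only [hP, if_false, lintegral_zero]

theorem continuousOn_sliceWidth (hl0 : 0 < l) (hl1 : l < 1) (hz : z < 1) :
    ContinuousOn (fun y => sliceWidth l y z) (Icc z 1) := by
  unfold sliceWidth sliceLower
  exact (by fun_prop : Continuous _).continuousOn.sub <| continuousOn_const.sub <|
    (by fun_prop : Continuous _).continuousOn.div (by fun_prop : Continuous _).continuousOn
      fun y hy => (sliceLower_denom_pos hl0 hl1.le hy.1 hz).ne'

theorem sliceWidth_nonneg (hl0 : 0 < l) (hl1 : l < 1) (hz : z < 1) (hy : y ∈ Icc z 1) :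
    0 ≤ sliceWidth l y z := by
  have hd := sliceLower_denom_pos hl0 hl1.le hy.1 hz
  have : y - z ≤ (y - z) * (1 - z) / (y - z + l * (1 - y)) := by
    rw [le_div_iff₀ hd]
    nlinarith [mul_nonneg (mul_nonneg (sub_nonneg.2 hy.1) (sub_nonneg.2 hl1.le)) (sub_nonneg.2 hy.2)]
  rw [sliceWidth, sliceLower]
  linarith

theorem integral_sliceWidth (hl0 : 0 < l) (hl1 : l < 1) (hz : z < 1) :
    ∫ y in z..1, sliceWidth l y z = ((1 - l ^ 2) / 2 + l * log l) / (1 - l) ^ 2 * (1 - z) ^ 2 := by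
  have hl : 1 - l ≠ 0 := (sub_pos.2 hl1).ne'
  have hderiv : ∀ y ∈ uIcc z 1, HasDerivAt
      (fun y => (1 - z) / (1 - l) * y - l * (1 - z) ^ 2 / (1 - l) ^ 2 * log ((1 - l) * y + (l - z))
        - (y - z) ^ 2 / 2)
      (sliceWidth l y z) y := by
    intro y hy
    rw [uIcc_of_le hz.le] at hy
    have hd := sliceLower_denom_pos hl0 hl1.le hy.1 hz
    have hD : (1 - l) * y + (l - z) ≠ 0 := by linarith
    have hlin : HasDerivAt (fun y => (1 - l) * y + (l - z)) (1 - l) y := by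
      simpa using ((hasDerivAt_id y).const_mul (1 - l)).add_const (l - z)
    have h := (((hasDerivAt_id' y).const_mul ((1 - z) / (1 - l))).sub
      ((hlin.log hD).const_mul (l * (1 - z) ^ 2 / (1 - l) ^ 2))).sub
      (((hasDerivAt_id' y).sub_const z).pow 2 |>.div_const 2)
    refine h.congr_deriv ?_
    unfold sliceWidth sliceLower
    field_simp
    ring
  rw [intervalIntegral.integral_eq_sub_of_hasDerivAt hderiv
    ((continuousOn_sliceWidth hl0 hl1 hz).mono (uIcc_of_le hz.le).le).intervalIntegrable,
    show (1 - l) * 1 + (l - z) = 1 - z by ring, show (1 - l) * z + (l - z) = l * (1 - z) by ring,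
    log_mul hl0.ne' (sub_pos.2 hz).ne']
  field_simp
  ring

theorem one_sub_sq_div_two_add_mul_log_nonneg (hl0 : 0 < l) (hl1 : l < 1) :
    0 ≤ (1 - l ^ 2) / 2 + l * log l := by
  have h : 0 ≤ ∫ y in l..1, sliceWidth l y l :=
    intervalIntegral.integral_nonneg hl1.le fun y hy => sliceWidth_nonneg hl0 hl1 hl1 hy
  rwa [integral_sliceWidth hl0 hl1 hl1, div_mul_cancel₀ _ (pow_ne_zero 2 (sub_pos.2 hl1).ne')] at h

end

theorem stmt_15 (l_z : ℝ) (h0 : 0 < l_z) (h1 : l_z < 1) :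
    MeasureTheory.volume {p : ℝ × ℝ × ℝ |
        0 ≤ p.1 ∧ p.1 ≤ 1 ∧ 0 ≤ p.2.1 ∧ p.2.1 ≤ 1 ∧ l_z ≤ p.2.2 ∧
        p.1 + p.2.1 - 1 ≤ p.2.2 ∧
        2 * p.2.2 ≤ p.1 + p.2.1 -
          Real.sqrt ((p.1 - p.2.1) ^ 2 + 4 * l_z * (1 - p.1) * (1 - p.2.1))} =
      ENNReal.ofReal (((1 - l_z) / 6) * (1 + 2 * l_z * Real.log l_z - l_z ^ 2)) := by
  set c := ((1 - l_z ^ 2) / 2 + l_z * log l_z) / (1 - l_z) ^ 2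
  have hc : 0 ≤ c := div_nonneg (one_sub_sq_div_two_add_mul_log_nonneg h0 h1) (sq_nonneg _)
  change volume {p : ℝ × ℝ × ℝ | InBilinearHull l_z p.1 p.2.1 p.2.2} = _
  rw [Measure.volume_eq_prod, Measure.volume_eq_prod,
    prod_prod_apply_eq_lintegral_lintegral (measurableSet_inBilinearHull l_z)]
  simp only [mem_ofPred_eq, lintegral_volume_inBilinearHull_section h0 h1]
  rw [lintegral_indicator measurableSet_Icc]
  calc ∫⁻ z in Icc l_z 1, ∫⁻ y in Icc z 1, ENNReal.ofReal (sliceWidth l_z y z)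
      = ∫⁻ z in Ico l_z 1, ENNReal.ofReal (c * (1 - z) ^ 2) := by
        rw [← setLIntegral_congr Ico_ae_eq_Icc]
        refine setLIntegral_congr_fun measurableSet_Ico fun z hz => ?_
        rw [setLIntegral_Icc_ofReal_eq_integral hz.2.le (continuousOn_sliceWidth h0 h1 hz.2)
          (fun y hy => sliceWidth_nonneg h0 h1 hz.2 hy), integral_sliceWidth h0 h1 hz.2]
    _ = ENNReal.ofReal (∫ z in l_z..1, c * (1 - z) ^ 2) := by
        rw [setLIntegral_congr Ico_ae_eq_Icc, setLIntegral_Icc_ofReal_eq_integral h1.le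
          (by fun_prop) fun z _ => mul_nonneg hc (sq_nonneg _)]
    _ = ENNReal.ofReal (((1 - l_z) / 6) * (1 + 2 * l_z * Real.log l_z - l_z ^ 2)) := by
        congr 1
        rw [intervalIntegral.integral_const_mul,
          intervalIntegral.integral_comp_sub_left (fun z => z ^ 2), integral_pow]
        have : 1 - l_z ≠ 0 := (sub_pos.2 h1).ne'
        simp only [c]
        field_simp
        ring
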